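/- Theorem (existence of Hamilton-decomposable tournaments of every odd order): For every n ≥ 1 there exist n permutations σ₁, …, σ_n of a vertex set of size 2n+1 (e.g., Fin (2n+1)), each a single cycle of length 2n+1, such that the arc sets A_i = {(x, σ_i x) : x} are pairwise disjoint and their union is the arc set of a tournament: for every pair of distinct vertices x, y, exactly one of (x, y) and (y, x) lies in the union of the A_i. Consequently there exists a diregular tournament on 2n+1 points that decomposes into n arc-disjoint directed Hamilton circuits, whether or not 2n+1 is prime. -/

import Mathlib

/-!
Take the vertices to be `∞` together with `ZMod (2n)`. The zigzag `0, 1, -1, 2, -2, …, n`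
lists `ZMod (2n)`; its consecutive differences `1, -2, 3, -4, …, 2n - 1` are the nonzero
residues, each once, and read backwards it is its own translate by `n`. Let `C i` be the
Hamilton circuit `∞, i, i + 1, i - 1, …, i + n, ∞`. Because of the differences the `2n`
circuits `C i` are arc-disjoint, so by counting every arc `(x, y)` lies on exactly one of them,
say `C i₀`; because of the reversal `C (i + n)` is `C i` reversed, so `(y, x)` lies on
`C (i₀ + n)`. Exactly one of `i₀`, `i₀ + n` is a residue below `n`, so `C 0, …, C (n - 1)`
decompose a tournament.
-/

theorem ZMod.val_add_one_of_add_one_ne_zero {m : ℕ} [Fact (1 < m)] {p : ZMod m}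
    (hp : p + 1 ≠ 0) : (p + 1).val = p.val + 1 := by
  have h := (ZMod.val_ne_zero _).mpr hp
  rw [ZMod.val_add, ZMod.val_one] at h ⊢
  have := p.val_lt
  refine Nat.mod_eq_of_lt (lt_of_le_of_ne (by omega) fun hm => h ?_)
  rw [hm, Nat.mod_self]

theorem ZMod.eq_of_intCast_eq_of_abs_sub_lt {m : ℕ} {a b : ℤ} (h : (a : ZMod m) = b)
    (hab : |b - a| < m) : a = b :=
  (sub_eq_zero.mp <| Int.eq_zero_of_abs_lt_dvd ((ZMod.intCast_eq_intCast_iff_dvd_sub a b m).mp h)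
    hab).symm

theorem Equiv.exists_pow_permCongr_addRight_one_apply_eq {m : ℕ} [NeZero m] {β : Type*}
    (e : ZMod m ≃ β) (x y : β) : ∃ k : ℕ, y = ((e.permCongr (Equiv.addRight 1)) ^ k) x := by
  have hpow (k : ℕ) (p : ZMod m) : ((e.permCongr (Equiv.addRight 1)) ^ k) (e p) = e (p + k) := by
    induction k with
    | zero => simp
    | succ k ih => rw [pow_succ', Equiv.Perm.mul_apply, ih]; simp [add_assoc]
  refine ⟨(e.symm y - e.symm x).val, ?_⟩
  rw [← e.apply_symm_apply x, hpow, ZMod.natCast_zmod_val]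
  simp

namespace Walecki

def zigzag (j : ℕ) : ℤ := if j % 2 = 1 then ((j : ℤ) + 1) / 2 else -((j : ℤ) / 2)

theorem zigzag_injective : Function.Injective zigzag := by
  intro j j' h
  unfold zigzag at h
  split_ifs at h <;> omega

variable {n : ℕ}

theorem zigzag_cast_injOn {j j' : ℕ} (hj : j < 2 * n) (hj' : j' < 2 * n)
    (h : (zigzag j : ZMod (2 * n)) = zigzag j') : j = j' :=
  zigzag_injective <| ZMod.eq_of_intCast_eq_of_abs_sub_lt h <| by
    rw [abs_lt]; unfold zigzag; split_ifs <;> omega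

theorem zigzag_succ_sub_injOn {j j' : ℕ} (hj : j + 1 < 2 * n) (hj' : j' + 1 < 2 * n)
    (h : (zigzag (j + 1) : ZMod (2 * n)) - zigzag j = zigzag (j' + 1) - zigzag j') : j = j' := by
  -- the difference `±(k + 1)` is congruent to `k + 1` or `2n - (k + 1)`, both in `[1, 2n)`
  have shift : ∀ k : ℕ, (zigzag (k + 1) : ZMod (2 * n)) - zigzag k =
      ((if k % 2 = 0 then (k : ℤ) + 1 else 2 * n - (k + 1) : ℤ) : ZMod (2 * n)) := by
    intro k
    rw [← Int.cast_sub, ZMod.intCast_eq_intCast_iff_dvd_sub]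
    unfold zigzag
    split_ifs <;> first | exact ⟨0, by omega⟩ | exact ⟨1, by omega⟩
  rw [shift, shift] at h
  have := ZMod.eq_of_intCast_eq_of_abs_sub_lt h (by rw [abs_lt]; split_ifs <;> omega)
  split_ifs at this <;> omega

theorem zigzag_two_mul_sub_one_sub {j : ℕ} (hj : j < 2 * n) :
    (zigzag (2 * n - 1 - j) : ZMod (2 * n)) = zigzag j + n := by
  rw [← Int.cast_natCast, ← Int.cast_add, ZMod.intCast_eq_intCast_iff_dvd_sub]
  unfold zigzag
  split_ifs <;> first | exact ⟨0, by omega⟩ | exact ⟨1, by omega⟩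

theorem natCast_add_self_eq_zero : (n : ZMod (2 * n)) + n = 0 := by
  rw [← Nat.cast_add, ← two_mul, ZMod.natCast_self]

theorem natCast_fin_injective : Function.Injective fun i : Fin n => ((i : ℕ) : ZMod (2 * n)) := by
  intro i j h
  have := congrArg ZMod.val h
  rw [ZMod.val_natCast_of_lt (by omega), ZMod.val_natCast_of_lt (by omega)] at this
  exact Fin.ext this

/-- The vertex at position `p` of `C i`, with `none` for `∞`. -/
def circuitVertex (i : ZMod (2 * n)) (p : ZMod (2 * n + 1)) : Option (ZMod (2 * n)) :=
  if p = 0 then none else some (zigzag (p.val - 1) + i)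

variable {i j : ZMod (2 * n)} {p q : ZMod (2 * n + 1)}

@[simp]
theorem circuitVertex_zero : circuitVertex i 0 = none :=
  if_pos rfl

@[simp]
theorem circuitVertex_eq_none_iff : circuitVertex i p = none ↔ p = 0 := by
  simp [circuitVertex]

theorem circuitVertex_of_ne_zero (hp : p ≠ 0) :
    circuitVertex i p = some (zigzag (p.val - 1) + i) :=
  if_neg hp

theorem circuitVertex_injective (i : ZMod (2 * n)) : Function.Injective (circuitVertex i) := by
  intro p q h
  by_cases hp : p = 0 <;> by_cases hq : q = 0
  · rw [hp, hq]
  · simp [circuitVertex, hp, hq] at h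
  · simp [circuitVertex, hp, hq] at h
  · rw [circuitVertex_of_ne_zero hp, circuitVertex_of_ne_zero hq, Option.some_inj,
      add_left_inj] at h
    have hp' := (ZMod.val_ne_zero p).mpr hp
    have hq' := (ZMod.val_ne_zero q).mpr hq
    have := zigzag_cast_injOn (by have := p.val_lt; omega) (by have := q.val_lt; omega) h
    exact ZMod.val_injective _ (by omega)

theorem circuitVertex_add_half_neg (i : ZMod (2 * n)) (p : ZMod (2 * n + 1)) :
    circuitVertex (i + (n : ZMod (2 * n))) (-p) = circuitVertex i p := by
  by_cases hp : p = 0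
  · simp [hp]
  rw [circuitVertex_of_ne_zero (neg_ne_zero.mpr hp), circuitVertex_of_ne_zero hp, ZMod.neg_val,
    if_neg hp]
  have h0 := (ZMod.val_ne_zero p).mpr hp
  have hlt := p.val_lt
  have h := zigzag_two_mul_sub_one_sub (n := n) (j := 2 * n - p.val) (by omega)
  rw [show 2 * n - 1 - (2 * n - p.val) = p.val - 1 by omega] at h
  rw [show 2 * n + 1 - p.val - 1 = 2 * n - p.val by omega, h]
  congr 1
  ring

theorem eq_of_circuitVertex_eq (hp : p ≠ 0) (h : circuitVertex i p = circuitVertex j p) :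
    i = j := by
  rw [circuitVertex_of_ne_zero hp, circuitVertex_of_ne_zero hp, Option.some_inj] at h
  exact add_left_cancel h

variable [NeZero n]

instance fact_one_lt_two_mul_add_one : Fact (1 < 2 * n + 1) :=
  ⟨by have := NeZero.pos n; omega⟩

noncomputable def circuitEquiv (i : ZMod (2 * n)) : ZMod (2 * n + 1) ≃ Option (ZMod (2 * n)) :=
  Equiv.ofBijective _ <| (Fintype.bijective_iff_injective_and_card _).mpr
    ⟨circuitVertex_injective i, by simp [ZMod.card]⟩

theorem exists_circuitVertex_eq (i : ZMod (2 * n)) (x : Option (ZMod (2 * n))) :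
    ∃ p, circuitVertex i p = x :=
  (circuitEquiv i).surjective x

noncomputable def circuit (i : ZMod (2 * n)) : Equiv.Perm (Option (ZMod (2 * n))) :=
  (circuitEquiv i).permCongr (Equiv.addRight 1)

theorem circuit_circuitVertex (i : ZMod (2 * n)) (p : ZMod (2 * n + 1)) :
    circuit i (circuitVertex i p) = circuitVertex i (p + 1) := by
  simp [circuit, circuitEquiv]

theorem circuit_apply_ne (i : ZMod (2 * n)) (x : Option (ZMod (2 * n))) : circuit i x ≠ x := by
  obtain ⟨p, rfl⟩ := exists_circuitVertex_eq i x
  rw [circuit_circuitVertex, (circuitVertex_injective i).ne_iff]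
  simp

theorem circuit_add_half_circuit (i : ZMod (2 * n)) (x : Option (ZMod (2 * n))) :
    circuit (i + (n : ZMod (2 * n))) (circuit i x) = x := by
  obtain ⟨p, rfl⟩ := exists_circuitVertex_eq i x
  rw [circuit_circuitVertex, ← circuitVertex_add_half_neg i (p + 1), circuit_circuitVertex,
    ← circuitVertex_add_half_neg i p]
  congr 1
  ring

theorem circuit_apply_eq_iff_add_half {x y : Option (ZMod (2 * n))} :
    circuit i y = x ↔ circuit (i + (n : ZMod (2 * n))) x = y := by
  constructor
  · rintro rfl
    exact circuit_add_half_circuit i y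
  · rintro rfl
    simpa [add_assoc, natCast_add_self_eq_zero] using
      circuit_add_half_circuit (i + (n : ZMod (2 * n))) x

theorem eq_of_consecutive_circuitVertex_eq
    (h₀ : circuitVertex i p = circuitVertex j q)
    (h₁ : circuitVertex i (p + 1) = circuitVertex j (q + 1)) : p = q := by
  by_cases hp : p = 0
  · subst hp
    exact (circuitVertex_eq_none_iff.mp (h₀.symm.trans circuitVertex_zero)).symm
  by_cases hp₁ : p + 1 = 0
  · have hq₁ : q + 1 = 0 := circuitVertex_eq_none_iff.mp (h₁.symm.trans (by simp [hp₁]))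
    exact add_right_cancel (hp₁.trans hq₁.symm)
  have hq : q ≠ 0 := by
    rintro rfl
    simp [hp] at h₀
  have hq₁ : q + 1 ≠ 0 := by
    intro hq₁
    simp [hq₁, hp₁] at h₁
  rw [circuitVertex_of_ne_zero hp, circuitVertex_of_ne_zero hq, Option.some_inj] at h₀
  rw [circuitVertex_of_ne_zero hp₁, circuitVertex_of_ne_zero hq₁, Option.some_inj,
    ZMod.val_add_one_of_add_one_ne_zero hp₁, ZMod.val_add_one_of_add_one_ne_zero hq₁,
    Nat.add_sub_cancel, Nat.add_sub_cancel] at h₁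
  have hp' := (ZMod.val_ne_zero p).mpr hp
  have hq' := (ZMod.val_ne_zero q).mpr hq
  have hpv := (p + 1).val_lt
  have hqv := (q + 1).val_lt
  rw [ZMod.val_add_one_of_add_one_ne_zero hp₁] at hpv
  rw [ZMod.val_add_one_of_add_one_ne_zero hq₁] at hqv
  have := zigzag_succ_sub_injOn (n := n) (j := p.val - 1) (j' := q.val - 1) (by omega) (by omega)
    (by rw [Nat.sub_add_cancel (by omega), Nat.sub_add_cancel (by omega)]
        linear_combination h₁ - h₀)
  exact ZMod.val_injective _ (by omega)

theorem eq_of_circuit_apply_eq {x : Option (ZMod (2 * n))} (h : circuit i x = circuit j x) :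
    i = j := by
  obtain ⟨p, rfl⟩ := exists_circuitVertex_eq i x
  obtain ⟨q, hq⟩ := exists_circuitVertex_eq j (circuitVertex i p)
  have h₁ : circuitVertex i (p + 1) = circuitVertex j (q + 1) := by
    rw [← circuit_circuitVertex, ← circuit_circuitVertex, hq, h]
  obtain rfl := eq_of_consecutive_circuitVertex_eq hq.symm h₁
  rcases eq_or_ne p 0 with rfl | hp
  · exact eq_of_circuitVertex_eq (by simp) h₁
  · exact eq_of_circuitVertex_eq hp hq.symm

theorem exists_circuit_apply_eq {x y : Option (ZMod (2 * n))} (hxy : x ≠ y) :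
    ∃ i, circuit i x = y := by
  let f (i : ZMod (2 * n)) : {y // y ≠ x} := ⟨circuit i x, circuit_apply_ne i x⟩
  have hf : f.Bijective := (Fintype.bijective_iff_injective_and_card f).mpr
    ⟨fun i j h => eq_of_circuit_apply_eq (congrArg Subtype.val h),
      by simp [Fintype.card_subtype_compl, ZMod.card]⟩
  obtain ⟨i, hi⟩ := hf.surjective ⟨y, hxy.symm⟩
  exact ⟨i, congrArg Subtype.val hi⟩

theorem exists_fin_natCast_eq_iff (c : ZMod (2 * n)) :
    (∃ i : Fin n, ((i : ℕ) : ZMod (2 * n)) = c) ↔ c.val < n := by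
  constructor
  · rintro ⟨i, rfl⟩
    rw [ZMod.val_natCast_of_lt (by omega)]
    exact i.isLt
  · intro h
    exact ⟨⟨c.val, h⟩, ZMod.natCast_zmod_val c⟩

theorem xor_val_lt_val_add_lt (c : ZMod (2 * n)) :
    Xor (c.val < n) ((c + n).val < n) := by
  have hc := c.val_lt
  rw [ZMod.val_add, ZMod.val_natCast_of_lt (by have := NeZero.pos n; omega)]
  rcases lt_or_ge c.val n with h | h
  · rw [Nat.mod_eq_of_lt (by omega)]
    exact Or.inl ⟨h, by omega⟩
  · rw [Nat.mod_eq_sub_mod (by omega), Nat.mod_eq_of_lt (by omega)]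
    exact Or.inr ⟨by omega, by omega⟩

theorem xor_exists_circuit_apply_eq {x y : Option (ZMod (2 * n))} (hxy : x ≠ y) :
    Xor (∃ i : Fin n, circuit ((i : ℕ) : ZMod (2 * n)) x = y)
      (∃ i : Fin n, circuit ((i : ℕ) : ZMod (2 * n)) y = x) := by
  obtain ⟨i₀, hi₀⟩ := exists_circuit_apply_eq hxy
  have harc (i) : circuit i x = y ↔ i = i₀ :=
    ⟨fun h => eq_of_circuit_apply_eq (h.trans hi₀.symm), by rintro rfl; exact hi₀⟩
  have hrev (i) : circuit i y = x ↔ i = i₀ + n := by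
    rw [circuit_apply_eq_iff_add_half, harc]
    constructor <;> rintro rfl
    · linear_combination -natCast_add_self_eq_zero (n := n)
    · linear_combination natCast_add_self_eq_zero (n := n)
  simp only [harc, hrev, exists_fin_natCast_eq_iff]
  exact xor_val_lt_val_add_lt i₀

end Walecki

open Walecki in
/-- Existence of Hamilton-decomposable tournaments of every odd order: for every
`n ≥ 1` there exist `n` permutations of `Fin (2n+1)`, each a single cycle of
length `2n+1`, whose arc sets `{(x, σᵢ x)}` are pairwise disjoint, contain no
loops, and whose union is the arc set of a tournament: for distinct `x, y`
exactly one of `(x, y)` and `(y, x)` lies in the union. Hence there is a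
diregular tournament on `2n+1` points decomposing into `n` arc-disjoint directed
Hamilton circuits, whether or not `2n+1` is prime. -/
theorem exists_hamilton_decomposable_tournament (n : ℕ) (hn : 1 ≤ n) :
    ∃ σ : Fin n → Equiv.Perm (Fin (2 * n + 1)),
      (∀ i : Fin n, ∀ v : Fin (2 * n + 1),
        {w : Fin (2 * n + 1) | ∃ k : ℕ, w = ((σ i) ^ k) v} = Set.univ) ∧
      (∀ i : Fin n, ∀ x : Fin (2 * n + 1), σ i x ≠ x) ∧
      (∀ i j : Fin n, i ≠ j → ∀ x : Fin (2 * n + 1), σ i x ≠ σ j x) ∧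
      (∀ x y : Fin (2 * n + 1), x ≠ y →
        Xor' (∃ i : Fin n, σ i x = y) (∃ i : Fin n, σ i y = x)) := by
  have : NeZero n := ⟨by omega⟩
  let g : Option (ZMod (2 * n)) ≃ Fin (2 * n + 1) :=
    Fintype.equivFinOfCardEq (by simp [ZMod.card])
  refine ⟨fun i => g.permCongr (circuit ((i : ℕ) : ZMod (2 * n))), fun i v => ?_, fun i x => ?_,
    fun i j hij x => ?_, fun x y hxy => ?_⟩
  · exact Set.eq_univ_of_forall fun w =>
      Equiv.exists_pow_permCongr_addRight_one_apply_eq ((circuitEquiv _).trans g) v w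
  all_goals simp only [Equiv.permCongr_apply, Ne, ← g.eq_symm_apply, Equiv.symm_apply_apply]
  · exact circuit_apply_ne _ _
  · exact fun h => hij (natCast_fin_injective (eq_of_circuit_apply_eq h))
  · exact xor_exists_circuit_apply_eq (g.symm.injective.ne hxy)
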